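/- (Rounding property) If X ~ Concrete(α, λ), then P(Xₖ > Xᵢ for all i ≠ k) = αₖ / (∑ᵢ αᵢ). -/

import Mathlib

/-!
Conditionally on `G k = x`, the event `X i < X k` for all `i ≠ k` is `G i < G k + log (α k / α i)`
for all `i ≠ k`, which by independence has probability
`∏_{i ≠ k} exp (-(α i / α k) e^{-x}) = exp (-C e^{-x})` with `C = ∑_{i ≠ k} α i / α k`.
The substitution `u = e^{-x}` turns the standard Gumbel law into the standard exponential one, so
integrating over `x` gives `∫₀^∞ e^{-u} e^{-C u} du = 1 / (1 + C) = α k / ∑ i, α i`.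
-/

open MeasureTheory Real ProbabilityTheory Set Filter
open scoped ENNReal

namespace ProbabilityTheory

noncomputable def gumbelPDF (x : ℝ) : ℝ≥0∞ := ENNReal.ofReal (exp (-x) * exp (-exp (-x)))

noncomputable def gumbelMeasure : Measure ℝ := volume.withDensity gumbelPDF

lemma measurable_gumbelPDF : Measurable gumbelPDF := by
  unfold gumbelPDF
  fun_prop

instance : NullSingletonClass gumbelMeasure := by
  unfold gumbelMeasure
  infer_instance

lemma lintegral_gumbelMeasure_comp_exp_neg {g : ℝ → ℝ≥0∞} (hg : Measurable g) :
    ∫⁻ x, g (exp (-x)) ∂gumbelMeasure = ∫⁻ u in Ioi 0, ENNReal.ofReal (exp (-u)) * g u := by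
  have himage : (fun x : ℝ => exp (-x)) '' univ = Ioi 0 := by
    refine Set.ext fun u => ⟨?_, fun hu => ⟨-log u, trivial, by simp [exp_log hu]⟩⟩
    rintro ⟨x, -, rfl⟩
    exact exp_pos _
  have hderiv : ∀ x ∈ univ, HasDerivWithinAt (fun x : ℝ => exp (-x)) (-exp (-x)) univ x :=
    fun x _ => by simpa using (hasDerivAt_neg x).exp
  have hinj : InjOn (fun x : ℝ => exp (-x)) univ := fun x _ y _ h => by simpa using h
  rw [← himage, lintegral_image_eq_lintegral_abs_deriv_mul MeasurableSet.univ hderiv hinj,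
    Measure.restrict_univ, gumbelMeasure,
    lintegral_withDensity_eq_lintegral_mul _ measurable_gumbelPDF (by fun_prop)]
  congr 1
  ext x
  simp only [Pi.mul_apply, gumbelPDF, abs_neg, abs_of_pos (exp_pos _),
    ENNReal.ofReal_mul (exp_pos _).le, mul_assoc]

lemma gumbelMeasure_Iio (t : ℝ) : gumbelMeasure (Iio t) = ENNReal.ofReal (exp (-exp (-t))) := by
  have hind : (Iio t).indicator (1 : ℝ → ℝ≥0∞)
      = fun x => (Ioi (exp (-t))).indicator 1 (exp (-x)) := by
    ext x
    simp [indicator]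
  calc gumbelMeasure (Iio t) = ∫⁻ x, (Iio t).indicator 1 x ∂gumbelMeasure :=
        (lintegral_indicator_one measurableSet_Iio).symm
    _ = ∫⁻ u in Ioi 0, (Ioi (exp (-t))).indicator (fun u => ENNReal.ofReal (exp (-u))) u := by
        rw [hind, lintegral_gumbelMeasure_comp_exp_neg (measurable_one.indicator measurableSet_Ioi)]
        congr 1
        ext u
        by_cases hu : exp (-t) < u <;> simp [hu]
    _ = ∫⁻ u in Ioi (exp (-t)), ENNReal.ofReal (exp (-u)) := by
        rw [setLIntegral_indicator measurableSet_Ioi, Ioi_inter_Ioi, max_eq_left (exp_pos _).le]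
    _ = ENNReal.ofReal (exp (-exp (-t))) := by
        rw [← ofReal_integral_eq_lintegral_ofReal (integrableOn_exp_neg_Ioi _)
          (ae_of_all _ fun u => (exp_pos _).le), integral_exp_neg_Ioi]

lemma gumbelMeasure_Iic (t : ℝ) : gumbelMeasure (Iic t) = ENNReal.ofReal (exp (-exp (-t))) := by
  rw [← measure_congr Iio_ae_eq_Iic, gumbelMeasure_Iio]

lemma lintegral_gumbelMeasure_exp_neg_mul_exp_neg {C : ℝ} (hC : 0 ≤ C) :
    ∫⁻ x, ENNReal.ofReal (exp (-(C * exp (-x)))) ∂gumbelMeasure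
      = ENNReal.ofReal (1 / (1 + C)) := by
  have hC' : 0 < 1 + C := by linarith
  rw [lintegral_gumbelMeasure_comp_exp_neg (g := fun u => ENNReal.ofReal (exp (-(C * u))))
    (by fun_prop)]
  calc ∫⁻ u in Ioi 0, ENNReal.ofReal (exp (-u)) * ENNReal.ofReal (exp (-(C * u)))
      = ∫⁻ u in Ioi 0, ENNReal.ofReal (exp (-(1 + C) * u)) := by
        congr 1
        ext u
        rw [← ENNReal.ofReal_mul (exp_pos _).le, ← exp_add]
        ring_nf
    _ = ENNReal.ofReal (1 / (1 + C)) := by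
        rw [← ofReal_integral_eq_lintegral_ofReal (exp_neg_integrableOn_Ioi 0 hC')
          (ae_of_all _ fun u => (exp_pos _).le), integral_exp_mul_Ioi (by linarith), mul_zero,
          exp_zero, neg_div_neg_eq]

variable {Ω : Type*} [MeasurableSpace Ω] {P : Measure Ω}

lemma map_eq_gumbelMeasure [IsFiniteMeasure P] {Y : Ω → ℝ} (hY : Measurable Y)
    (hcdf : ∀ t, P {ω | Y ω ≤ t} = ENNReal.ofReal (exp (-exp (-t)))) :
    P.map Y = gumbelMeasure :=
  Measure.ext_of_Iic _ _ fun t => by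
    rw [Measure.map_apply hY measurableSet_Iic, gumbelMeasure_Iic, ← hcdf]
    rfl

lemma IndepFun.measure_preimage_prodMk {α β : Type*} [MeasurableSpace α] [MeasurableSpace β]
    [IsFiniteMeasure P] {X : Ω → α} {Y : Ω → β} (hXY : IndepFun X Y P) (hX : Measurable X)
    (hY : Measurable Y) {B : Set (α × β)} (hB : MeasurableSet B) :
    P ((fun ω => (X ω, Y ω)) ⁻¹' B) = ∫⁻ x, P (Y ⁻¹' (Prod.mk x ⁻¹' B)) ∂P.map X := by
  rw [← Measure.map_apply (hX.prodMk hY) hB,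
    (indepFun_iff_map_prod_eq_prod_map_map hX.aemeasurable hY.aemeasurable).1 hXY,
    Measure.prod_apply hB]
  congr 1
  ext x
  exact Measure.map_apply hY (measurable_prodMk_left hB)

lemma iIndepFun.measure_forall_lt_add [IsFiniteMeasure P] {ι : Type*} [Fintype ι]
    [DecidableEq ι] {G : ι → Ω → ℝ} (hG : ∀ i, Measurable (G i)) (hIndep : iIndepFun G P)
    (k : ι) (c : ι → ℝ) :
    P {ω | ∀ i, i ≠ k → G i ω < c i + G k ω}
      = ∫⁻ x, ∏ i ∈ {k}ᶜ, P (G i ⁻¹' Iio (c i + x)) ∂P.map (G k) := by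
  let V : Ω → ({k}ᶜ : Finset ι) → ℝ := fun ω i => G i ω
  have hV : Measurable V := measurable_pi_lambda _ fun i => hG i
  have hindep : IndepFun (G k) V P :=
    (hIndep.indepFun_finset {k} {k}ᶜ disjoint_compl_right hG).comp
      (measurable_pi_apply (⟨k, Finset.mem_singleton_self k⟩ : ({k} : Finset ι))) measurable_id
  let B : Set (ℝ × (({k}ᶜ : Finset ι) → ℝ)) := {p | ∀ i, p.2 i < c i + p.1}
  have hB : MeasurableSet B := by
    simp only [B, ofPred_forall]
    exact MeasurableSet.iInter fun i => measurableSet_lt (by fun_prop) (by fun_prop)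
  have hevent : {ω | ∀ i, i ≠ k → G i ω < c i + G k ω} = (fun ω => (G k ω, V ω)) ⁻¹' B := by
    ext ω
    simp [B, V]
  rw [hevent, hindep.measure_preimage_prodMk (hG k) hV hB]
  congr 1
  ext x
  have hslice : V ⁻¹' (Prod.mk x ⁻¹' B) = ⋂ i ∈ ({k}ᶜ : Finset ι), G i ⁻¹' Iio (c i + x) := by
    ext ω
    simp [B, V]
  rw [hslice, hIndep.measure_inter_preimage_eq_mul _ fun i _ => measurableSet_Iio]

end ProbabilityTheory

lemma Real.exp_div_sum_exp_lt_iff {ι : Type*} [Fintype ι] {l : ℝ} (hl : 0 < l) (a : ι → ℝ)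
    (i k : ι) :
    exp (a i / l) / ∑ j, exp (a j / l) < exp (a k / l) / ∑ j, exp (a j / l) ↔ a i < a k := by
  have hsum : 0 < ∑ j, exp (a j / l) :=
    Finset.sum_pos (fun j _ => exp_pos _) ⟨i, Finset.mem_univ i⟩
  rw [div_lt_div_iff_of_pos_right hsum, exp_lt_exp, div_lt_div_iff_of_pos_right hl]

/-- Rounding property of the Concrete distribution. -/
theorem concrete_rounding
    {Ω : Type*} [MeasurableSpace Ω] (P : Measure Ω) [IsProbabilityMeasure P]
    (n : ℕ) (α : Fin n → ℝ) (hα : ∀ i, 0 < α i) (l : ℝ) (hl : 0 < l)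
    (G : Fin n → Ω → ℝ) (hG : ∀ i, Measurable (G i))
    (hIndep : iIndepFun G P)
    (hGumbel : ∀ i, ∀ g : ℝ,
      P {ω | G i ω ≤ g} = ENNReal.ofReal (Real.exp (-Real.exp (-g))))
    (X : Fin n → Ω → ℝ)
    (hX : ∀ k ω, X k ω = Real.exp ((Real.log (α k) + G k ω) / l)
        / ∑ i, Real.exp ((Real.log (α i) + G i ω) / l)) :
    ∀ k : Fin n,
      P {ω | ∀ i, i ≠ k → X i ω < X k ω} = ENNReal.ofReal (α k / ∑ i, α i) := by
  intro k
  have hlaw : ∀ i, P.map (G i) = gumbelMeasure := fun i => map_eq_gumbelMeasure (hG i) (hGumbel i)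
  let c : Fin n → ℝ := fun i => log (α k) - log (α i)
  let C : ℝ := ∑ i ∈ {k}ᶜ, α i / α k
  have hevent : {ω | ∀ i, i ≠ k → X i ω < X k ω}
      = {ω | ∀ i, i ≠ k → G i ω < c i + G k ω} := by
    ext ω
    refine forall₂_congr fun i _ => ?_
    rw [hX, hX, exp_div_sum_exp_lt_iff hl (fun j => log (α j) + G j ω)]
    constructor <;> intro h <;> linarith
  have hfactor : ∀ x i, P (G i ⁻¹' Iio (c i + x))
      = ENNReal.ofReal (exp (-(α i / α k * exp (-x)))) := by
    intro x i
    rw [← Measure.map_apply (hG i) measurableSet_Iio, hlaw i, gumbelMeasure_Iio, neg_add, exp_add,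
      neg_sub, exp_sub, exp_log (hα i), exp_log (hα k)]
  have hprod : ∀ x, ∏ i ∈ {k}ᶜ, P (G i ⁻¹' Iio (c i + x))
      = ENNReal.ofReal (exp (-(C * exp (-x)))) := by
    intro x
    rw [Finset.prod_congr rfl fun i _ => hfactor x i,
      ← ENNReal.ofReal_prod_of_nonneg fun _ _ => (exp_pos _).le, ← exp_sum, Finset.sum_mul,
      ← Finset.sum_neg_distrib]
  have hC : 0 ≤ C := Finset.sum_nonneg fun i _ => (div_pos (hα i) (hα k)).le
  rw [hevent, hIndep.measure_forall_lt_add hG k c, lintegral_congr hprod, hlaw k,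
    lintegral_gumbelMeasure_exp_neg_mul_exp_neg hC, Fintype.sum_eq_add_sum_compl k]
  have hαk : α k ≠ 0 := (hα k).ne'
  congr 1
  simp only [C, ← Finset.sum_div]
  field_simp
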